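/- Let A^{r×m}_l denote the set of r×m real matrices with at most l nonzero columns, and let S = A^{r×m}_l ∩ B(0,L) be its intersection with the open Frobenius ball of radius L > 0. Then the Minkowski dimension of S exists and equals l·r, provided l ≤ m. -/

import Mathlib

open MeasureTheory Filter Set
attribute [local instance] Matrix.frobeniusNormedAddCommGroup Matrix.frobeniusNormedSpace

noncomputable instance (m n : ℕ) : MeasureSpace (Matrix (Fin m) (Fin n) ℝ) :=
  inferInstanceAs (MeasureSpace ((Fin m) → (Fin n) → ℝ))

/-- covering number by open balls of radius ρ -/
noncomputable def covN {E : Type*} [PseudoMetricSpace E] (S : Set E) (ρ : ℝ) : ℕ :=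
  sInf {k : ℕ | ∃ t : Finset E, t.card = k ∧ S ⊆ ⋃ x ∈ t, Metric.ball x ρ}

noncomputable def dimUpper {E : Type*} [PseudoMetricSpace E] (S : Set E) : ℝ :=
  limsup (fun ρ : ℝ => Real.log (covN S ρ) / Real.log (1/ρ)) (nhdsWithin 0 (Set.Ioi 0))

noncomputable def dimLower {E : Type*} [PseudoMetricSpace E] (S : Set E) : ℝ :=
  liminf (fun ρ : ℝ => Real.log (covN S ρ) / Real.log (1/ρ)) (nhdsWithin 0 (Set.Ioi 0))

/-- singular values (unsorted, with multiplicity) -/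
noncomputable def singVals {m n : ℕ} (X : Matrix (Fin m) (Fin n) ℝ) : Fin n → ℝ :=
  fun i => Real.sqrt ((Matrix.isHermitian_conjTranspose_mul_self X).eigenvalues i)

noncomputable def sigma1 {m n : ℕ} (X : Matrix (Fin m) (Fin n) ℝ) : ℝ :=
  ⨆ i, singVals X i

open scoped Classical in
/-- product of nonzero singular values -/
noncomputable def Delta {m n : ℕ} (X : Matrix (Fin m) (Fin n) ℝ) : ℝ :=
  ∏ i ∈ Finset.univ.filter (fun i => singVals X i ≠ 0), singVals X i

/-- volume of the unit ball in ℝ^k -/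
noncomputable def VB (k : ℕ) : ℝ :=
  (volume (Metric.ball (0 : EuclideanSpace ℝ (Fin k)) 1)).toReal

/-- surface area of unit sphere in ℝ^r : A(r-1,1) = r * V(r,1) -/
noncomputable def ASurf (r : ℕ) : ℝ := r * VB r

/-- uniform distribution on the open ball of radius s in E -/
noncomputable def unifBall (E : Type*) [MeasureSpace E] [PseudoMetricSpace E] [Zero E] (s : ℝ) : Measure E :=
  (volume (Metric.ball (0 : E) s))⁻¹ • volume.restrict (Metric.ball (0:E) s)

/-! Up to the choice of the `l` columns that carry the entries, `S` is a finite union of isometric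
copies of the Frobenius ball of radius `L` in the `l r`-dimensional space of `r × l` matrices.
Comparing Haar volumes gives `c ρ^(-d) ≤ N(ρ) ≤ C ρ^(-d)` for a ball in a `d`-dimensional normed
space. Passing to finitely many isometric copies only changes the constant and the radius by a
factor of two, so `log N(ρ) / log(1/ρ) → l r`. -/

open Metric Module Topology

section CoveringNumber

variable {E F : Type*} [PseudoMetricSpace E] [PseudoMetricSpace F]

lemma covN_le_card {S : Set E} {ρ : ℝ} {t : Finset E} (h : S ⊆ ⋃ x ∈ t, ball x ρ) :
    covN S ρ ≤ t.card :=
  Nat.sInf_le ⟨t, rfl, h⟩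

lemma exists_card_eq_covN {S : Set E} {ρ : ℝ} {t : Finset E} (h : S ⊆ ⋃ x ∈ t, ball x ρ) :
    ∃ t' : Finset E, t'.card = covN S ρ ∧ S ⊆ ⋃ x ∈ t', ball x ρ :=
  Nat.sInf_mem (s := {k | ∃ t : Finset E, t.card = k ∧ S ⊆ ⋃ x ∈ t, ball x ρ}) ⟨t.card, t, rfl, h⟩

lemma exists_cover_card_le_of_subset_iUnion_image {ι : Type*} [Fintype ι] {f : ι → E → F}
    (hf : ∀ i, LipschitzWith 1 (f i)) {A : Set E} {S : Set F} (hS : S ⊆ ⋃ i, f i '' A)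
    {ρ : ℝ} {t : Finset E} (ht : A ⊆ ⋃ x ∈ t, ball x ρ) :
    ∃ T : Finset F, T.card ≤ Fintype.card ι * t.card ∧ S ⊆ ⋃ y ∈ T, ball y ρ := by
  classical
  refine ⟨Finset.univ.biUnion fun i => t.image (f i), ?_, fun y hy => ?_⟩
  · calc _ ≤ ∑ i, (t.image (f i)).card := Finset.card_biUnion_le
      _ ≤ ∑ _i : ι, t.card := Finset.sum_le_sum fun i _ => Finset.card_image_le
      _ = _ := by simp
  · obtain ⟨i, a, ha, rfl⟩ : ∃ i, ∃ a ∈ A, f i a = y := by simpa using hS hy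
    obtain ⟨x, hx, hax⟩ : ∃ x ∈ t, a ∈ ball x ρ := by simpa using ht ha
    refine mem_iUnion₂.2 ⟨f i x, by simpa using ⟨i, x, hx, rfl⟩, ?_⟩
    simpa using ((hf i).dist_le_mul a x).trans_lt (by simpa using hax)

/-- Centres of a `ρ`-cover of `S` are moved to points of the isometric copy of `A`, at the cost
of doubling the radius. -/
lemma covN_two_mul_le_of_isometry {f : E → F} (hf : Isometry f) {A : Set E} {S : Set F}
    (hAS : f '' A ⊆ S) {ρ : ℝ} {t : Finset F} (ht : S ⊆ ⋃ x ∈ t, ball x ρ) :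
    covN A (2 * ρ) ≤ covN S ρ := by
  classical
  rcases A.eq_empty_or_nonempty with rfl | ⟨a₀, -⟩
  · exact (covN_le_card (t := ∅) (by simp)).trans (Nat.zero_le _)
  have : Nonempty E := ⟨a₀⟩
  obtain ⟨t', ht'card, ht'⟩ := exists_card_eq_covN ht
  let c : F → E := fun x => Classical.epsilon fun a => a ∈ A ∧ f a ∈ ball x ρ
  have hcover : A ⊆ ⋃ y ∈ t'.image c, ball y (2 * ρ) := by
    intro a ha
    obtain ⟨x, hx, hax⟩ : ∃ x ∈ t', f a ∈ ball x ρ := by simpa using ht' (hAS ⟨a, ha, rfl⟩)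
    have hc : c x ∈ A ∧ f (c x) ∈ ball x ρ :=
      Classical.epsilon_spec (p := fun a => a ∈ A ∧ f a ∈ ball x ρ) ⟨a, ha, hax⟩
    refine mem_iUnion₂.2 ⟨c x, Finset.mem_image_of_mem c hx, ?_⟩
    calc dist a (c x) = dist (f a) (f (c x)) := (hf.dist_eq _ _).symm
      _ ≤ dist (f a) x + dist x (f (c x)) := dist_triangle _ _ _
      _ < ρ + ρ := add_lt_add (mem_ball.1 hax) (mem_ball'.1 hc.2)
      _ = 2 * ρ := by ring
  exact (covN_le_card hcover).trans (ht'card ▸ Finset.card_image_le)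

end CoveringNumber

section FiniteDimensional

variable {E : Type*} [NormedAddCommGroup E] [NormedSpace ℝ E] [FiniteDimensional ℝ E]

lemma pow_finrank_le_card_mul_pow_of_ball_subset {L ρ : ℝ} (hL : 0 < L) (hρ : 0 < ρ)
    {t : Finset E} (ht : ball (0 : E) L ⊆ ⋃ x ∈ t, ball x ρ) :
    L ^ finrank ℝ E ≤ t.card * ρ ^ finrank ℝ E := by
  borelize E
  let μ : Measure E := Measure.addHaar
  have hvol : μ (ball 0 L) ≤ ∑ x ∈ t, μ (ball x ρ) :=
    (measure_mono ht).trans (measure_biUnion_finset_le t _)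
  simp only [Measure.addHaar_ball_of_pos μ _ hL, Measure.addHaar_ball_of_pos μ _ hρ,
    Finset.sum_const, nsmul_eq_mul, ← mul_assoc] at hvol
  rwa [ENNReal.mul_le_mul_iff_left (measure_ball_pos μ 0 one_pos).ne' measure_ball_lt_top.ne,
    ← ENNReal.ofReal_natCast, ← ENNReal.ofReal_mul (by positivity),
    ENNReal.ofReal_le_ofReal_iff (by positivity)] at hvol

lemma card_mul_pow_finrank_le_of_pairwise_le_dist {L ρ : ℝ} (hL : 0 < L) (hρ : 0 < ρ)
    {t : Finset E} (htL : ↑t ⊆ ball (0 : E) L) (hsep : (t : Set E).Pairwise (ρ ≤ dist · ·)) :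
    t.card * (ρ / 2) ^ finrank ℝ E ≤ (L + ρ / 2) ^ finrank ℝ E := by
  borelize E
  let μ : Measure E := Measure.addHaar
  have hdisj : (t : Set E).PairwiseDisjoint fun x => ball x (ρ / 2) :=
    fun x hx y hy hxy => ball_disjoint_ball (by linarith [hsep hx hy hxy])
  have hsub : ⋃ x ∈ t, ball x (ρ / 2) ⊆ ball 0 (L + ρ / 2) :=
    iUnion₂_subset fun x hx => ball_subset_ball' (by linarith [mem_ball.1 (htL hx)])
  have hvol : ∑ x ∈ t, μ (ball x (ρ / 2)) ≤ μ (ball 0 (L + ρ / 2)) := by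
    rw [← measure_biUnion_finset hdisj fun _ _ => measurableSet_ball]
    exact measure_mono hsub
  simp only [Measure.addHaar_ball_of_pos μ _ (half_pos hρ),
    Measure.addHaar_ball_of_pos μ _ (by positivity : 0 < L + ρ / 2),
    Finset.sum_const, nsmul_eq_mul, ← mul_assoc] at hvol
  rwa [ENNReal.mul_le_mul_iff_left (measure_ball_pos μ 0 one_pos).ne' measure_ball_lt_top.ne,
    ← ENNReal.ofReal_natCast, ← ENNReal.ofReal_mul (by positivity),
    ENNReal.ofReal_le_ofReal_iff (by positivity)] at hvol

/-- A maximal `ρ`-separated subset of the ball is a `ρ`-cover of it. -/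
lemma exists_card_mul_pow_finrank_le_and_ball_subset {L ρ : ℝ} (hL : 0 < L) (hρ : 0 < ρ) :
    ∃ t : Finset E, t.card * (ρ / 2) ^ finrank ℝ E ≤ (L + ρ / 2) ^ finrank ℝ E ∧
      ball (0 : E) L ⊆ ⋃ x ∈ t, ball x ρ := by
  classical
  set P : Set ℕ := {k | ∃ t : Finset E, t.card = k ∧ ↑t ⊆ ball (0 : E) L ∧
    (t : Set E).Pairwise (ρ ≤ dist · ·)}
  have hbdd : BddAbove P := by
    refine ⟨⌊(L + ρ / 2) ^ finrank ℝ E / (ρ / 2) ^ finrank ℝ E⌋₊, ?_⟩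
    rintro _ ⟨t, rfl, htL, hsep⟩
    exact Nat.le_floor <| (le_div_iff₀ (by positivity)).2 <|
      card_mul_pow_finrank_le_of_pairwise_le_dist hL hρ htL hsep
  obtain ⟨t, htP, htL, hsep⟩ := Nat.sSup_mem (s := P) ⟨0, ∅, by simp⟩ hbdd
  refine ⟨t, card_mul_pow_finrank_le_of_pairwise_le_dist hL hρ htL hsep, fun y hy => ?_⟩
  by_contra hyt
  have hfar : ∀ x ∈ t, ρ ≤ dist y x := by simpa using hyt
  have hy_notMem : y ∉ t := fun h => (hfar y h).not_gt (by simpa using hρ)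
  have hinsert : (insert y t).card ∈ P := by
    refine ⟨_, rfl, ?_, ?_⟩
    · simpa [Set.insert_subset_iff] using ⟨mem_ball_zero_iff.1 hy, htL⟩
    · rw [Finset.coe_insert, Set.pairwise_insert]
      exact ⟨hsep, fun x hx _ => ⟨hfar x hx, dist_comm y x ▸ hfar x hx⟩⟩
  have := le_csSup hbdd hinsert
  rw [Finset.card_insert_of_notMem hy_notMem, htP] at this
  omega

lemma pow_finrank_le_covN_ball_mul_pow {L ρ : ℝ} (hL : 0 < L) (hρ : 0 < ρ) :
    L ^ finrank ℝ E ≤ covN (ball (0 : E) L) ρ * ρ ^ finrank ℝ E := by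
  obtain ⟨t, -, ht⟩ := exists_card_mul_pow_finrank_le_and_ball_subset (E := E) hL hρ
  obtain ⟨t', ht'card, ht'⟩ := exists_card_eq_covN ht
  exact ht'card ▸ pow_finrank_le_card_mul_pow_of_ball_subset hL hρ ht'

end FiniteDimensional

lemma tendsto_log_div_log_inv_of_bounds {N : ℝ → ℝ} {a b d : ℝ} (ha : 0 < a) (hb : 0 < b)
    (hN : ∀ᶠ ρ in 𝓝[>] 0, a * ρ⁻¹ ^ d ≤ N ρ ∧ N ρ ≤ b * ρ⁻¹ ^ d) :
    Tendsto (fun ρ => Real.log (N ρ) / Real.log (1 / ρ)) (𝓝[>] 0) (𝓝 d) := by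
  have hlog : Tendsto (fun ρ : ℝ => Real.log ρ⁻¹) (𝓝[>] 0) atTop :=
    Real.tendsto_log_atTop.comp tendsto_inv_nhdsGT_zero
  have hρ : ∀ᶠ ρ in 𝓝[>] (0 : ℝ), 0 < ρ ∧ 0 < Real.log ρ⁻¹ :=
    eventually_mem_nhdsWithin.and (hlog.eventually_gt_atTop 0)
  have hlim {c : ℝ} (hc : 0 < c) :
      Tendsto (fun ρ : ℝ => Real.log (c * ρ⁻¹ ^ d) / Real.log ρ⁻¹) (𝓝[>] 0) (𝓝 d) := by
    have h := (tendsto_const_nhds (x := Real.log c)).div_atTop hlog |>.const_add d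
    rw [add_zero] at h
    refine h.congr' ?_
    filter_upwards [hρ] with ρ ⟨hρ, hlogρ⟩
    rw [Real.log_mul hc.ne' (by positivity), Real.log_rpow (inv_pos.2 hρ), add_div,
      mul_div_cancel_right₀ _ hlogρ.ne', add_comm]
  simp only [one_div]
  refine tendsto_of_tendsto_of_tendsto_of_le_of_le' (hlim ha) (hlim hb) ?_ ?_
  · filter_upwards [hN, hρ] with ρ ⟨hlo, _⟩ ⟨hρ, hlogρ⟩
    exact div_le_div_of_nonneg_right (Real.log_le_log (by positivity) hlo) hlogρ.le
  · filter_upwards [hN, hρ] with ρ ⟨hlo, hhi⟩ ⟨hρ, hlogρ⟩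
    have hX : 0 < a * ρ⁻¹ ^ d := by positivity
    exact div_le_div_of_nonneg_right (Real.log_le_log (hX.trans_le hlo) hhi) hlogρ.le

section IsometricCopies

variable {E F ι : Type*} [NormedAddCommGroup E] [NormedSpace ℝ E] [FiniteDimensional ℝ E]
  [PseudoMetricSpace F] [Fintype ι] [Nonempty ι] {f : ι → E → F}

lemma covN_iUnion_image_ball_bounds (hf : ∀ i, Isometry (f i)) {L ρ : ℝ} (hρ : 0 < ρ)
    (hρL : ρ ≤ L) :
    (L / 2) ^ finrank ℝ E * ρ⁻¹ ^ finrank ℝ E ≤ covN (⋃ i, f i '' ball 0 L) ρ ∧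
      (covN (⋃ i, f i '' ball 0 L) ρ : ℝ) ≤
        Fintype.card ι * (3 * L) ^ finrank ℝ E * ρ⁻¹ ^ finrank ℝ E := by
  set d := finrank ℝ E
  have hL : 0 < L := hρ.trans_le hρL
  obtain ⟨t, htcard, ht⟩ := exists_card_mul_pow_finrank_le_and_ball_subset (E := E) hL hρ
  obtain ⟨T, hTcard, hT⟩ :=
    exists_cover_card_le_of_subset_iUnion_image (fun i => (hf i).lipschitz) subset_rfl ht
  constructor
  · obtain ⟨i⟩ := ‹Nonempty ι›
    have h2ρ := covN_two_mul_le_of_isometry (hf i) (subset_iUnion (fun i => f i '' ball 0 L) i) hT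
    calc (L / 2) ^ d * ρ⁻¹ ^ d = L ^ d / (2 * ρ) ^ d := by
          rw [← mul_pow, ← div_pow]; ring
      _ ≤ covN (ball (0 : E) L) (2 * ρ) :=
          (div_le_iff₀ (by positivity)).2 (pow_finrank_le_covN_ball_mul_pow hL (by positivity))
      _ ≤ _ := by exact_mod_cast h2ρ
  · have ht' : (t.card : ℝ) ≤ (3 * L) ^ d * ρ⁻¹ ^ d := by
      calc (t.card : ℝ) ≤ (L + ρ / 2) ^ d / (ρ / 2) ^ d := (le_div_iff₀ (by positivity)).2 htcard
        _ = ((2 * L + ρ) * ρ⁻¹) ^ d := by rw [← div_pow]; congr 1; field_simp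
        _ ≤ (3 * L * ρ⁻¹) ^ d := by gcongr; linarith
        _ = _ := mul_pow ..
    calc (covN _ ρ : ℝ) ≤ T.card := by exact_mod_cast covN_le_card hT
      _ ≤ Fintype.card ι * t.card := by exact_mod_cast hTcard
      _ ≤ _ := by rw [mul_assoc]; gcongr

theorem tendsto_log_covN_iUnion_image_ball (hf : ∀ i, Isometry (f i)) {L : ℝ} (hL : 0 < L) :
    Tendsto (fun ρ => Real.log (covN (⋃ i, f i '' ball 0 L) ρ) / Real.log (1 / ρ))
      (𝓝[>] 0) (𝓝 (finrank ℝ E)) := by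
  refine tendsto_log_div_log_inv_of_bounds (a := (L / 2) ^ finrank ℝ E)
    (b := Fintype.card ι * (3 * L) ^ finrank ℝ E) (by positivity) (by positivity) ?_
  filter_upwards [Ioc_mem_nhdsGT hL] with ρ ⟨hρ, hρL⟩
  simpa only [Real.rpow_natCast] using covN_iUnion_image_ball_bounds hf hρ hρL

end IsometricCopies

section ExtendCols

variable {α β γ R : Type*}

noncomputable def extendCols [Zero R] (e : β ↪ γ) (Y : Matrix α β R) : Matrix α γ R :=
  Matrix.of fun i => Function.extend e (Y i) 0

variable (e : β ↪ γ)

@[simp]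
lemma extendCols_apply_self [Zero R] (Y : Matrix α β R) (i : α) (k : β) :
    extendCols e Y i (e k) = Y i k :=
  e.injective.extend_apply _ _ _

lemma extendCols_apply_of_notMem_range [Zero R] {j : γ} (hj : j ∉ range e) (Y : Matrix α β R)
    (i : α) : extendCols e Y i j = 0 :=
  Function.extend_apply' _ _ _ hj

lemma extendCols_submatrix [Zero R] {X : Matrix α γ R} (hX : ∀ j ∉ range e, ∀ i, X i j = 0) :
    extendCols e (X.submatrix id e) = X := by
  ext i j
  by_cases hj : j ∈ range e
  · obtain ⟨k, rfl⟩ := hj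
    simp
  · rw [extendCols_apply_of_notMem_range e hj, hX j hj]

lemma extendCols_sub [AddGroup R] (Y Z : Matrix α β R) :
    extendCols e (Y - Z) = extendCols e Y - extendCols e Z := by
  ext i j
  by_cases hj : j ∈ range e
  · obtain ⟨k, rfl⟩ := hj
    simp
  · simp [extendCols_apply_of_notMem_range e hj]

variable [Fintype α] [Fintype β] [Fintype γ] [NormedAddCommGroup R]

lemma norm_extendCols (Y : Matrix α β R) : ‖extendCols e Y‖ = ‖Y‖ := by
  simp only [Matrix.frobenius_norm_def]
  congr 1
  refine Finset.sum_congr rfl fun i _ => (Fintype.sum_of_injective e e.injective _ _ ?_ ?_).symm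
  · intro j hj
    simp [extendCols_apply_of_notMem_range e hj]
  · simp

lemma isometry_extendCols : Isometry (extendCols (α := α) (R := R) e) :=
  Isometry.of_dist_eq fun Y Z => by
    rw [dist_eq_norm, dist_eq_norm, ← extendCols_sub, norm_extendCols]

end ExtendCols

lemma setOf_colSupport_le_inter_ball_eq_iUnion {r l m : ℕ} (hlm : l ≤ m) (L : ℝ) :
    {X : Matrix (Fin r) (Fin m) ℝ |
        ∃ J : Finset (Fin m), J.card ≤ l ∧ ∀ j ∉ J, ∀ i, X i j = 0} ∩ ball 0 L =
      ⋃ e : Fin l ↪ Fin m, extendCols e '' ball 0 L := by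
  ext X
  simp only [mem_inter_iff, mem_ofPred_eq, mem_iUnion, mem_image, mem_ball_zero_iff]
  constructor
  · rintro ⟨⟨J, hJl, hJ⟩, hXL⟩
    obtain ⟨J', hJJ', hJ'⟩ := Finset.exists_superset_card_eq hJl (by simpa using hlm)
    let e : Fin l ↪ Fin m := (J'.orderEmbOfFin hJ').toEmbedding
    have hX : extendCols e (X.submatrix id e) = X := by
      refine extendCols_submatrix e fun j hj => hJ j fun hjJ => hj ?_
      simpa [e, Finset.range_orderEmbOfFin] using hJJ' hjJ
    exact ⟨e, X.submatrix id e, by rwa [← norm_extendCols e, hX], hX⟩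
  · rintro ⟨e, Y, hY, rfl⟩
    refine ⟨⟨Finset.univ.map e, by simp, fun j hj => extendCols_apply_of_notMem_range e ?_ Y⟩, ?_⟩
    · simpa using hj
    · rwa [norm_extendCols]

theorem stmt6_general (r l m : ℕ) (hlm : l ≤ m)
    (L : ℝ) (hL : 0 < L) (S : Set (Matrix (Fin r) (Fin m) ℝ))
    (hS : S = {X : Matrix (Fin r) (Fin m) ℝ |
        ∃ J : Finset (Fin m), J.card ≤ l ∧ ∀ j ∉ J, ∀ i, X i j = 0} ∩ Metric.ball 0 L) :
    Filter.Tendsto (fun ρ : ℝ => Real.log (covN S ρ) / Real.log (1 / ρ))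
      (nhdsWithin 0 (Set.Ioi 0)) (nhds ((l : ℝ) * r)) := by
  have : Nonempty (Fin l ↪ Fin m) := ⟨Fin.castLEEmb hlm⟩
  have hdim : (l : ℝ) * r = finrank ℝ (Matrix (Fin r) (Fin l) ℝ) := by
    simp [Module.finrank_matrix, mul_comm]
  rw [hS, setOf_colSupport_le_inter_ball_eq_iUnion hlm, hdim]
  exact tendsto_log_covN_iUnion_image_ball (isometry_extendCols ·) hL

theorem stmt6 (r l m : ℕ) (hr : 0 < r) (hl : 0 < l) (hm : 0 < m) (hlm : l ≤ m)
    (L : ℝ) (hL : 0 < L) (S : Set (Matrix (Fin r) (Fin m) ℝ))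
    (hS : S = {X : Matrix (Fin r) (Fin m) ℝ |
        ∃ J : Finset (Fin m), J.card ≤ l ∧ ∀ j ∉ J, ∀ i, X i j = 0} ∩ Metric.ball 0 L) :
    Filter.Tendsto (fun ρ : ℝ => Real.log (covN S ρ) / Real.log (1 / ρ))
      (nhdsWithin 0 (Set.Ioi 0)) (nhds ((l : ℝ) * r)) :=
  stmt6_general r l m hlm L hL S hS
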